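/- Correctness of the truncated Kronecker top-p search for d = 2: given vectors a ∈ ℝ^{m_1}, b ∈ ℝ^{m_2} such that a has entries sorted so a_{i_1} ≥ … ≥ a_{i_{m_1}} and all entries of a and b are positive, the set of the p largest entries of a ⊗ b is contained in { a_{i_s} b_j : 1 ≤ s ≤ min(p, m_1), 1 ≤ j ≤ m_2 }. -/
import Mathlib


open Matrix

/-- correctness of the truncated Kronecker top-p search for d = 2:
if T is a set of p largest entries of a ⊗ b (all entries positive), then for each
(i,j) ∈ T the value a i is among the p largest values of a, i.e. strictly fewer
than p indices i' satisfy a i' > a i. -/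
theorem truncated_kron_top_p_search (m1 m2 p : ℕ)
    (a : Fin m1 → ℝ) (b : Fin m2 → ℝ)
    (ha : ∀ i, 0 < a i) (hb : ∀ j, 0 < b j)
    (T : Finset (Fin m1 × Fin m2)) (hcard : T.card = p)
    (hT : ∀ q ∈ T, ∀ q' ∉ T, a q'.1 * b q'.2 ≤ a q.1 * b q.2) :
    ∀ q ∈ T, (Finset.univ.filter (fun i' : Fin m1 => a q.1 < a i')).card < p := by
  intro q hq
  set S := Finset.univ.filter (fun i' : Fin m1 => a q.1 < a i') with hS
  have hmap : ∀ i' ∈ S, (i', q.2) ∈ T.erase q := by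
    intro i' hi'
    have hlt : a q.1 < a i' := (Finset.mem_filter.mp hi').2
    have hmem : (i', q.2) ∈ T := by
      by_contra hcon
      have := hT q hq (i', q.2) hcon
      simp only at this
      nlinarith [hb q.2]
    refine Finset.mem_erase.mpr ⟨?_, hmem⟩
    intro h
    have : i' = q.1 := congrArg Prod.fst h
    simp [this] at hlt
  have hinj : Set.InjOn (fun i' : Fin m1 => (i', q.2)) S := by
    intro x _ y _ h
    exact congrArg Prod.fst h
  have hle : S.card ≤ (T.erase q).card :=
    Finset.card_le_card_of_injOn _ hmap hinj
  have : (T.erase q).card < T.card := Finset.card_erase_lt_of_mem hq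
  omega
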